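/- Let p(φ) = a₀ + a₃cos(3φ) + b₃sin(3φ) be the support function of a closed convex curve C (so p + p'' > 0 everywhere) of length L = ∫₀^{2π} p dφ. Let e(φ) = (−p'(φ)sin φ − p''(φ)cos φ, p'(φ)cos φ − p''(φ)sin φ) be the evolute of C, and let c(φ) = (q(φ)cos φ − q'(φ)sin φ, q(φ)sin φ + q'(φ)cos φ) with q = p − L/(2π) be the interior parallel curve to C at distance L/(2π). Then the evolute and the parallel curve are similar with ratio 3: there exists an angle θ such that the image of e equals the image of c under the rotation by θ about the origin followed by the homothety of ratio 3 centered at the origin. -/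

import Mathlib

/-!
For `p = a₀ + a₃ cos 3φ + b₃ sin 3φ` the length is `L = 2π a₀`, so the parallel curve at distance
`L / 2π` has generalized support function `q = p - a₀`. The evolute is itself the curve with
generalized support function `ψ ↦ p'(ψ - π/2)`, and for a harmonic of order three this equals
`-3 q(ψ)`. Scaling a support function by `-3` scales its curve by `-3`, i.e. applies the rotation by
`π` followed by the homothety of ratio `3`.
-/

open Real intervalIntegral

noncomputable def supportCurve (h : ℝ → ℝ) (φ : ℝ) : ℝ × ℝ :=
  (h φ * cos φ - deriv h φ * sin φ, h φ * sin φ + deriv h φ * cos φ)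

noncomputable def evolute (p : ℝ → ℝ) (φ : ℝ) : ℝ × ℝ :=
  (-(deriv p φ) * sin φ - deriv (deriv p) φ * cos φ,
    deriv p φ * cos φ - deriv (deriv p) φ * sin φ)

theorem supportCurve_const_mul (k : ℝ) (h : ℝ → ℝ) :
    supportCurve (fun φ => k * h φ) = k • supportCurve h := by
  ext φ <;> simp only [supportCurve, deriv_const_mul_field', Pi.smul_apply, Prod.smul_mk,
    smul_eq_mul] <;> ring

theorem evolute_eq_supportCurve_comp (p : ℝ → ℝ) (φ : ℝ) :
    evolute p φ = supportCurve (fun ψ => deriv p (ψ - π / 2)) (φ + π / 2) := by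
  simp only [evolute, supportCurve, deriv_comp_sub_const, add_sub_cancel_right,
    cos_add_pi_div_two, sin_add_pi_div_two]
  ext <;> ring

theorem range_evolute (p : ℝ → ℝ) :
    Set.range (evolute p) = Set.range (supportCurve fun ψ => deriv p (ψ - π / 2)) := by
  rw [← (Equiv.addRight (π / 2)).surjective.range_comp (supportCurve _)]
  exact congrArg Set.range (funext (evolute_eq_supportCurve_comp p))

theorem hasDerivAt_harmonic (a₀ a b n φ : ℝ) :
    HasDerivAt (fun φ => a₀ + a * cos (n * φ) + b * sin (n * φ))
      (n * (b * cos (n * φ) - a * sin (n * φ))) φ :=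
  ((((hasDerivAt_const_mul n).cos.const_mul a).const_add a₀).add
    ((hasDerivAt_const_mul n).sin.const_mul b)).congr_deriv (by ring)

theorem deriv_harmonic_three_sub_pi_div_two (a₀ a b ψ : ℝ) :
    deriv (fun φ => a₀ + a * cos (3 * φ) + b * sin (3 * φ)) (ψ - π / 2) =
      -3 * (a * cos (3 * ψ) + b * sin (3 * ψ)) := by
  have hshift : 3 * (ψ - π / 2) = 3 * ψ + π / 2 - 2 * π := by ring
  rw [(hasDerivAt_harmonic a₀ a b 3 _).deriv, hshift, cos_sub_two_pi, sin_sub_two_pi,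
    cos_add_pi_div_two, sin_add_pi_div_two]
  ring

theorem integral_harmonic (a₀ a b : ℝ) {n : ℕ} (hn : n ≠ 0) :
    ∫ φ in (0 : ℝ)..2 * π, (a₀ + a * cos (n * φ) + b * sin (n * φ)) = 2 * π * a₀ := by
  have hint (f : ℝ → ℝ) (hf : Continuous f) : IntervalIntegrable f MeasureTheory.volume 0 (2 * π) :=
    hf.intervalIntegrable _ _
  rw [integral_add (hint _ (by fun_prop)) (hint _ (by fun_prop)),
    integral_add (hint _ (by fun_prop)) (hint _ (by fun_prop))]
  simp [integral_comp_mul_left, hn, sin_periodic.nat_mul_eq, cos_periodic.nat_mul_eq]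

theorem evolute_similar_parallel_curve_ratio_three_general
    (a₀ a₃ b₃ : ℝ) (p q : ℝ → ℝ) (L : ℝ) (e c : ℝ → ℝ × ℝ)
    (hp : ∀ φ, p φ = a₀ + a₃ * Real.cos (3 * φ) + b₃ * Real.sin (3 * φ))
    (hL : L = ∫ φ in (0:ℝ)..(2 * π), p φ)
    (he : ∀ φ, e φ =
      (-(deriv p φ) * Real.sin φ - deriv (deriv p) φ * Real.cos φ,
        deriv p φ * Real.cos φ - deriv (deriv p) φ * Real.sin φ))
    (hq : ∀ φ, q φ = p φ - L / (2 * π))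
    (hc : ∀ φ, c φ =
      (q φ * Real.cos φ - deriv q φ * Real.sin φ,
        q φ * Real.sin φ + deriv q φ * Real.cos φ)) :
    ∃ θ : ℝ,
      Set.range e =
        Set.range fun φ : ℝ =>
          ((3 * ((c φ).1 * Real.cos θ - (c φ).2 * Real.sin θ),
            3 * ((c φ).1 * Real.sin θ + (c φ).2 * Real.cos θ)) : ℝ × ℝ) := by
  have hp : p = fun φ => a₀ + a₃ * cos (3 * φ) + b₃ * sin (3 * φ) := funext hp
  have hlength : L / (2 * π) = a₀ := by
    have := integral_harmonic a₀ a₃ b₃ (n := 3) three_ne_zero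
    push_cast at this
    rw [hL, hp, this]
    field_simp
  have hshifted_deriv : (fun ψ => deriv p (ψ - π / 2)) = fun ψ => -3 * q ψ := by
    ext ψ
    rw [hq, hlength, hp, deriv_harmonic_three_sub_pi_div_two]
    ring
  refine ⟨π, ?_⟩
  rw [show e = evolute p from funext he, range_evolute, hshifted_deriv, supportCurve_const_mul,
    show supportCurve q = c from (funext hc).symm]
  simp only [cos_pi, sin_pi]
  congr 1
  ext φ <;> simp only [Pi.smul_apply, Prod.smul_fst, Prod.smul_snd, smul_eq_mul] <;> ring

/-- Proposition 5.3: for a closed convex curve with support function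
`p(φ) = a₀ + a₃ cos 3φ + b₃ sin 3φ`, the evolute and the interior parallel
curve at distance `L/(2π)` are similar with ratio `3`. -/
theorem evolute_similar_parallel_curve_ratio_three
    (a₀ a₃ b₃ : ℝ) (p q : ℝ → ℝ) (L : ℝ) (e c : ℝ → ℝ × ℝ)
    (hp : ∀ φ, p φ = a₀ + a₃ * Real.cos (3 * φ) + b₃ * Real.sin (3 * φ))
    (hconv : ∀ φ, p φ + deriv (deriv p) φ > 0)
    (hL : L = ∫ φ in (0:ℝ)..(2 * π), p φ)
    (he : ∀ φ, e φ =
      (-(deriv p φ) * Real.sin φ - deriv (deriv p) φ * Real.cos φ,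
        deriv p φ * Real.cos φ - deriv (deriv p) φ * Real.sin φ))
    (hq : ∀ φ, q φ = p φ - L / (2 * π))
    (hc : ∀ φ, c φ =
      (q φ * Real.cos φ - deriv q φ * Real.sin φ,
        q φ * Real.sin φ + deriv q φ * Real.cos φ)) :
    ∃ θ : ℝ,
      Set.range e =
        Set.range fun φ : ℝ =>
          ((3 * ((c φ).1 * Real.cos θ - (c φ).2 * Real.sin θ),
            3 * ((c φ).1 * Real.sin θ + (c φ).2 * Real.cos θ)) : ℝ × ℝ) :=
  evolute_similar_parallel_curve_ratio_three_general a₀ a₃ b₃ p q L e c hp hL he hq hc
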